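/- For integers m ≥ 0 and n, k, s ≥ 1, one has x₁^m ш (x₁^n x₀^k x₁^s) = Σ_{m₁+m₂+m₃=m, m_i ≥ 0} C(m₁+n-1, n-1) · C(m₃+s-1, s-1) · x₁^{m₁+n} 𝔅_{m₂+1}^{k} x₁^{m₃+s}, an identity of multisets of words, where a binomial coefficient c multiplying a multiset means the multiset repeated c times. -/

import Mathlib

/-- The shuffle product of two words, as a multiset of words. -/
def shuffle {X : Type*} : List X → List X → Multiset (List X)
  | u, [] => {u}
  | [], v => {v}
  | a :: u, b :: v =>
      (shuffle u (b :: v)).map (a :: ·) + (shuffle (a :: u) v).map (b :: ·)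
termination_by u v => u.length + v.length

/-- The two-letter alphabet `X = {x₀, x₁}`. -/
def x0 : Bool := false
def x1 : Bool := true

/-- `𝔅_r^m`: the multiset of all words `x₀^{m₁} x₁ x₀^{m₂} x₁ ⋯ x₁ x₀^{m_r}`
with `m₁ + ⋯ + m_r = m`, `m_i ≥ 0`. -/
def B (r m : ℕ) : Multiset (List Bool) :=
  (Finset.Nat.antidiagonalTuple r m).val.map fun f =>
    List.intercalate [x1] (List.ofFn fun i => List.replicate (f i) x0)

/-- `S w T`: the multiset of all concatenations `u ++ w ++ v` with `u ∈ S`, `v ∈ T`,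
counted with multiplicity. -/
def msConcat {X : Type*} (S : Multiset (List X)) (w : List X) (T : Multiset (List X)) :
    Multiset (List X) :=
  S.bind fun u => T.map fun v => u ++ w ++ v

/-! In a shuffle of `u` into `v ++ b :: w`, the letter `b` cuts `u` into a prefix shuffled into
`v` and a suffix shuffled into `w`. Cutting `x₁^n x₀^k x₁^s` at the last letter of `x₁^n` and at
the first letter of `x₁^s` leaves the shuffles `x₁^i ш x₁^j = C(i+j, i) x₁^{i+j}`, which produce
the binomial weights, and `x₀^k ш x₁^r = 𝔅_{r+1}^k`, which follows from the same cut at the first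
letter of `x₁^r`. -/

open Finset

variable {X : Type*}

@[simp] lemma shuffle_nil_left (v : List X) : shuffle [] v = {v} := by
  cases v <;> simp [shuffle]

@[simp] lemma shuffle_nil_right (u : List X) : shuffle u [] = {u} := by
  rw [shuffle]

lemma shuffle_cons_cons (a b : X) (u v : List X) :
    shuffle (a :: u) (b :: v) =
      (shuffle u (b :: v)).map (a :: ·) + (shuffle (a :: u) v).map (b :: ·) := by
  rw [shuffle]

lemma shuffle_comm (u v : List X) : shuffle u v = shuffle v u := by
  induction u generalizing v with
  | nil => simp
  | cons a u ihu =>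
    induction v with
    | nil => simp
    | cons b v ihv => rw [shuffle_cons_cons, shuffle_cons_cons, ihu, ← ihv, add_comm]

@[simp] lemma msConcat_singleton (u w : List X) (T : Multiset (List X)) :
    msConcat {u} w T = T.map (u ++ w ++ ·) := by
  simp [msConcat]

lemma msConcat_add_left (S S' : Multiset (List X)) (w : List X) (T : Multiset (List X)) :
    msConcat (S + S') w T = msConcat S w T + msConcat S' w T :=
  Multiset.add_bind _ _ _

lemma msConcat_map_cons (a : X) (S : Multiset (List X)) (w : List X) (T : Multiset (List X)) :
    msConcat (S.map (a :: ·)) w T = (msConcat S w T).map (a :: ·) := by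
  simp [msConcat, Multiset.bind_map, Multiset.map_bind, Multiset.map_map]

lemma msConcat_singleton_right (S : Multiset (List X)) (w v : List X) :
    msConcat S w {v} = S.map (· ++ w ++ v) := by
  simp [msConcat, Multiset.bind_singleton]

lemma msConcat_nsmul_left (c : ℕ) (S : Multiset (List X)) (w : List X) (T : Multiset (List X)) :
    msConcat (c • S) w T = c • msConcat S w T := by
  induction c with
  | zero => simp [msConcat]
  | succ c ih => rw [succ_nsmul, msConcat_add_left, ih, succ_nsmul]

lemma msConcat_nsmul_right (c : ℕ) (S : Multiset (List X)) (w : List X) (T : Multiset (List X)) :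
    msConcat S w (c • T) = c • msConcat S w T := by
  induction c with
  | zero => simp [msConcat]
  | succ c ih =>
    simp only [msConcat, succ_nsmul, Multiset.map_add, Multiset.bind_add] at ih ⊢
    rw [ih]

lemma Multiset.map_finset_sum {ι Y : Type*} (s : Finset ι) (g : ι → Multiset X) (f : X → Y) :
    (∑ i ∈ s, g i).map f = ∑ i ∈ s, (g i).map f :=
  map_sum (Multiset.mapAddMonoidHom f) g s

theorem shuffle_append_cons (b : X) (w u v : List X) :
    shuffle u (v ++ b :: w) = ∑ i ∈ range (u.length + 1),
      msConcat (shuffle (u.take i) v) [b] (shuffle (u.drop i) w) := by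
  induction u generalizing v with
  | nil => simp
  | cons a u ihu =>
    rw [List.length_cons, sum_range_succ']
    simp only [List.take_succ_cons, List.drop_succ_cons, List.take_zero, List.drop_zero]
    induction v with
    | nil =>
      rw [List.nil_append, shuffle_cons_cons, ← List.nil_append (b :: w), ihu,
        Multiset.map_finset_sum]
      simp
    | cons c v ihv =>
      rw [List.cons_append, shuffle_cons_cons, ← List.cons_append, ihu, ihv, Multiset.map_add,
        Multiset.map_finset_sum, Multiset.map_finset_sum]
      simp only [shuffle_nil_left, shuffle_cons_cons, msConcat_singleton, msConcat_add_left,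
        msConcat_map_cons, sum_add_distrib, Multiset.map_map, Function.comp_apply, List.append_assoc,
        List.cons_append, List.nil_append]
      abel

theorem shuffle_replicate_append_cons (a b : X) (m : ℕ) (v w : List X) :
    shuffle (List.replicate m a) (v ++ b :: w) = ∑ p ∈ antidiagonal m,
      msConcat (shuffle (List.replicate p.1 a) v) [b] (shuffle (List.replicate p.2 a) w) := by
  rw [shuffle_append_cons, List.length_replicate,
    Nat.sum_antidiagonal_eq_sum_range_succ_mk]
  refine sum_congr rfl fun i hi => ?_
  rw [List.take_replicate, List.drop_replicate,
    min_eq_left (Nat.le_of_lt_succ (mem_range.mp hi))]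

theorem shuffle_replicate_replicate (a : X) (i j : ℕ) :
    shuffle (List.replicate i a) (List.replicate j a) =
      (i + j).choose i • {List.replicate (i + j) a} := by
  induction i generalizing j with
  | zero => simp
  | succ i ihi =>
    induction j with
    | zero => simp
    | succ j ihj =>
      rw [List.replicate_succ, List.replicate_succ, shuffle_cons_cons, ← List.replicate_succ,
        ← List.replicate_succ, ihi, ihj, Multiset.map_nsmul, Multiset.map_nsmul,
        Multiset.map_singleton, Multiset.map_singleton, ← List.replicate_succ,
        ← List.replicate_succ, show i + 1 + j = i + (j + 1) by omega, ← add_nsmul,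
        show i + 1 + (j + 1) = i + (j + 1) + 1 by omega, Nat.choose_succ_succ', add_comm]

lemma Finset.Nat.antidiagonalTuple_succ_val (k n : ℕ) :
    (Nat.antidiagonalTuple (k + 1) n).val =
      (antidiagonal n).val.bind fun p => (Nat.antidiagonalTuple k p.2).val.map (Fin.cons p.1) := by
  change (List.Nat.antidiagonalTuple (k + 1) n : Multiset (Fin (k + 1) → ℕ)) =
    Multiset.bind (List.Nat.antidiagonal n : Multiset (ℕ × ℕ)) fun p =>
      (List.Nat.antidiagonalTuple k p.2 : Multiset _).map (Fin.cons p.1)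
  simp only [Multiset.map_coe, Multiset.coe_bind]
  rfl

lemma Finset.Nat.sum_antidiagonalTuple_succ {M : Type*} [AddCommMonoid M] (k n : ℕ)
    (g : (Fin (k + 1) → ℕ) → M) :
    ∑ f ∈ Nat.antidiagonalTuple (k + 1) n, g f =
      ∑ p ∈ antidiagonal n, ∑ f ∈ Nat.antidiagonalTuple k p.2, g (Fin.cons p.1 f) := by
  rw [Finset.sum, Nat.antidiagonalTuple_succ_val, Multiset.map_bind, Multiset.sum_bind]
  simp only [Multiset.map_map, Function.comp_def]
  rfl

lemma B_one (k : ℕ) : B 1 k = {List.replicate k x0} := by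
  simp [B, Nat.antidiagonalTuple_one]

lemma B_add_two (r k : ℕ) :
    B (r + 2) k = ∑ p ∈ antidiagonal k, msConcat {List.replicate p.1 x0} [x1] (B (r + 1) p.2) := by
  rw [B, Nat.antidiagonalTuple_succ_val, Multiset.map_bind, sum_eq_multiset_sum,
    Multiset.bind, Multiset.join]
  congr 1
  refine Multiset.map_congr rfl fun p _ => ?_
  rw [B, msConcat_singleton, Multiset.map_map, Multiset.map_map]
  refine Multiset.map_congr rfl fun f _ => ?_
  simp only [Function.comp_apply, List.ofFn_succ, Fin.cons_zero, Fin.cons_succ]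
  rw [List.intercalate_cons_of_ne_nil (by simp)]

theorem shuffle_replicate_x0_replicate_x1 (k r : ℕ) :
    shuffle (List.replicate k x0) (List.replicate r x1) = B (r + 1) k := by
  induction r generalizing k with
  | zero => simp [B_one]
  | succ r ih =>
    rw [← List.nil_append (List.replicate (r + 1) x1), List.replicate_succ,
      shuffle_replicate_append_cons, B_add_two]
    simp [ih]

theorem shuffle_x1_pow_x1x0x1_general (m n k s : ℕ) (hn : 1 ≤ n) (hs : 1 ≤ s) :
    shuffle (List.replicate m x1)
        (List.replicate n x1 ++ List.replicate k x0 ++ List.replicate s x1) =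
      ∑ f ∈ Finset.Nat.antidiagonalTuple 3 m,
        (Nat.choose (f 0 + n - 1) (n - 1) * Nat.choose (f 2 + s - 1) (s - 1)) •
          (B (f 1 + 1) k).map
            (fun w => List.replicate (f 0 + n) x1 ++ w ++ List.replicate (f 2 + s) x1) := by
  obtain ⟨n, rfl⟩ := Nat.exists_eq_add_of_le' hn
  obtain ⟨s, rfl⟩ := Nat.exists_eq_add_of_le' hs
  have hword : List.replicate (n + 1) x1 ++ List.replicate k x0 ++ List.replicate (s + 1) x1 =
      List.replicate n x1 ++ x1 :: (List.replicate k x0 ++ x1 :: List.replicate s x1) := by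
    rw [List.replicate_succ', List.replicate_succ]
    simp
  rw [hword, shuffle_replicate_append_cons, Nat.sum_antidiagonalTuple_succ]
  refine sum_congr rfl fun p _ => ?_
  rw [Nat.sum_antidiagonalTuple_succ, shuffle_replicate_append_cons, shuffle_replicate_replicate,
    msConcat_nsmul_left, msConcat_singleton, Multiset.map_finset_sum, smul_sum]
  refine sum_congr rfl fun q _ => ?_
  rw [Nat.antidiagonalTuple_one, sum_singleton, shuffle_comm, shuffle_replicate_x0_replicate_x1,
    shuffle_replicate_replicate, msConcat_nsmul_right, msConcat_singleton_right,
    Multiset.map_nsmul, Multiset.map_map, smul_smul]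
  simp only [Fin.cons_zero, Nat.add_sub_cancel, ← add_assoc, Nat.choose_symm_add]
  congr 1
  refine Multiset.map_congr rfl fun w _ => ?_
  rw [List.replicate_succ', List.replicate_succ]
  simp

theorem shuffle_x1_pow_x1x0x1 (m n k s : ℕ) (hn : 1 ≤ n) (hk : 1 ≤ k) (hs : 1 ≤ s) :
    shuffle (List.replicate m x1)
        (List.replicate n x1 ++ List.replicate k x0 ++ List.replicate s x1) =
      ∑ f ∈ Finset.Nat.antidiagonalTuple 3 m,
        (Nat.choose (f 0 + n - 1) (n - 1) * Nat.choose (f 2 + s - 1) (s - 1)) •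
          (B (f 1 + 1) k).map
            (fun w => List.replicate (f 0 + n) x1 ++ w ++ List.replicate (f 2 + s) x1) :=
  shuffle_x1_pow_x1x0x1_general m n k s hn hs
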